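/- Let δ,γ ∈ ℕ⁺ and ρ ∈ ℕ∪{0}, and let (T,u) be a (δγ,ρ)-regular rooted tree. Let I be a nonempty set with |I| ≤ γ and let Φ : N^ρ_T(u) → I be a function. Then there exist i ∈ I and a (δ,ρ)-regular rooted subtree (T',u) of (T,u) (in particular N^ρ_{T'}(u) ⊆ N^ρ_T(u)) such that Φ(v) = i for every v ∈ N^ρ_{T'}(u). -/

import Mathlib

/-- The induced subgraph of `G` on `S` is nonempty and connected, expressed via
walks of `G` staying inside `S`. -/
def ConnectedIn {V : Type*} (G : SimpleGraph V) (S : Set V) : Prop :=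
  S.Nonempty ∧ ∀ a ∈ S, ∀ b ∈ S, ∃ w : G.Walk a b, ∀ v ∈ w.support, v ∈ S

/-- An induced `H`-model in `G`: pairwise disjoint nonempty connected branch sets,
joined by an edge iff the corresponding vertices of `H` are adjacent. -/
def IsInducedModel {W V : Type*} (H : SimpleGraph W) (G : SimpleGraph V) (X : W → Set V) : Prop :=
  (∀ w, ConnectedIn G (X w)) ∧
  (∀ w w', w ≠ w' → Disjoint (X w) (X w')) ∧
  (∀ w w', H.Adj w w' → ∃ a ∈ X w, ∃ b ∈ X w', G.Adj a b) ∧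
  (∀ w w', w ≠ w' → ¬ H.Adj w w' → ∀ a ∈ X w, ∀ b ∈ X w', ¬ G.Adj a b)

/-- `G` has an induced minor isomorphic to `H`. -/
def InducedMinor {W V : Type*} (H : SimpleGraph W) (G : SimpleGraph V) : Prop :=
  ∃ X : W → Set V, IsInducedModel H G X

/-- An `H`-model in `G` (for the minor relation). -/
def IsMinorModel {W V : Type*} (H : SimpleGraph W) (G : SimpleGraph V) (X : W → Set V) : Prop :=
  (∀ w, ConnectedIn G (X w)) ∧
  (∀ w w', w ≠ w' → Disjoint (X w) (X w')) ∧
  (∀ w w', H.Adj w w' → ∃ a ∈ X w, ∃ b ∈ X w', G.Adj a b)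

/-- `G` has a minor isomorphic to `H`. -/
def HasMinor {W V : Type*} (H : SimpleGraph W) (G : SimpleGraph V) : Prop :=
  ∃ X : W → Set V, IsMinorModel H G X

/-- `(T, β)` is a tree decomposition of `G`. -/
structure IsTreeDecomp {V ι : Type*} (G : SimpleGraph V) (T : SimpleGraph ι)
    (β : ι → Finset V) : Prop where
  tree : T.IsTree
  bags_connected : ∀ v : V, ConnectedIn T {i | v ∈ β i}
  edges_covered : ∀ u v : V, G.Adj u v → ∃ i, u ∈ β i ∧ v ∈ β i

/-- `G` has a tree decomposition of width at most `w`. -/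
def TreewidthLE {V : Type*} (G : SimpleGraph V) (w : ℕ) : Prop :=
  ∃ (n : ℕ) (T : SimpleGraph (Fin n)) (β : Fin n → Finset V),
    IsTreeDecomp G T β ∧ ∀ i, (β i).card ≤ w + 1

noncomputable def treewidth {V : Type*} (G : SimpleGraph V) : ℕ :=
  sInf {w | TreewidthLE G w}

/-- `G` has a path decomposition of width at most `w`. -/
def PathwidthLE {V : Type*} (G : SimpleGraph V) (w : ℕ) : Prop :=
  ∃ (n : ℕ) (β : Fin n → Finset V),
    IsTreeDecomp G (SimpleGraph.pathGraph n) β ∧ ∀ i, (β i).card ≤ w + 1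

noncomputable def pathwidth {V : Type*} (G : SimpleGraph V) : ℕ :=
  sInf {w | PathwidthLE G w}

/-- A hereditary class of finite graphs (each finite graph is represented, up to
isomorphism, on some `Fin n`): the class is closed under induced subgraphs,
i.e. under pulling back along injections. -/
def Hereditary (𝒢 : ∀ n : ℕ, SimpleGraph (Fin n) → Prop) : Prop :=
  ∀ (n m : ℕ) (G : SimpleGraph (Fin n)) (f : Fin m ↪ Fin n),
    𝒢 n G → 𝒢 m (G.comap ⇑f)

/-- A graph `J` is `ζ`-jagged if every induced subgraph with pathwidth at least 3
has at least `ζ` vertices of degree two (in that induced subgraph). -/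
def Jagged {V : Type*} (ζ : ℕ) (J : SimpleGraph V) : Prop :=
  ∀ s : Set V, 3 ≤ pathwidth (J.induce s) →
    ζ ≤ {v | v ∈ s ∧ ({w | w ∈ s ∧ J.Adj v w}).ncard = 2}.ncard

/-- A graph is `d`-degenerate if every nonempty induced subgraph has a vertex of
degree at most `d`. -/
def Degenerate {V : Type*} (d : ℕ) (G : SimpleGraph V) : Prop :=
  ∀ s : Set V, s.Nonempty → ∃ v ∈ s, ({w | w ∈ s ∧ G.Adj v w}).ncard ≤ d

/-- The complete binary tree of radius `ρ`: vertices are binary strings of length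
at most `ρ`, and `x` is adjacent to `b :: x` (its children). -/
def binTree (ρ : ℕ) : SimpleGraph {l : List Bool // l.length ≤ ρ} where
  Adj x y := (∃ b : Bool, (x : List Bool) = b :: (y : List Bool)) ∨
             (∃ b : Bool, (y : List Bool) = b :: (x : List Bool))
  symm := by constructor; rintro x y (h | h); exact Or.inr h; exact Or.inl h
  loopless := by
    constructor
    rintro x (⟨b, hb⟩ | ⟨b, hb⟩) <;>
      · have := congrArg List.length hb
        simp at this

/-- The `n × n` square grid graph. -/
def gridGraph (n : ℕ) : SimpleGraph (Fin n × Fin n) where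
  Adj p q := (p.1 = q.1 ∧ ((p.2 : ℕ) + 1 = (q.2 : ℕ) ∨ (q.2 : ℕ) + 1 = (p.2 : ℕ))) ∨
             (p.2 = q.2 ∧ ((p.1 : ℕ) + 1 = (q.1 : ℕ) ∨ (q.1 : ℕ) + 1 = (p.1 : ℕ)))
  symm := by
    constructor
    rintro p q (⟨h1, h2⟩ | ⟨h1, h2⟩)
    · exact Or.inl ⟨h1.symm, h2.symm⟩
    · exact Or.inr ⟨h1.symm, h2.symm⟩
  loopless := by constructor; rintro p (⟨_, h | h⟩ | ⟨_, h | h⟩) <;> omega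

/-- A graph is planar iff it is isomorphic to a minor of some square grid. -/
def IsPlanar {W : Type*} (H : SimpleGraph W) : Prop :=
  ∃ n : ℕ, HasMinor H (gridGraph n)

/-- `S` is the vertex set of an induced path in `G` from `x` to `y`. -/
def IsInducedPathSet {V : Type*} (G : SimpleGraph V) (S : Set V) (x y : V) : Prop :=
  ∃ p : G.Walk x y, p.IsPath ∧ {v | v ∈ p.support} = S ∧
    ∀ u v : V, u ∈ p.support → v ∈ p.support → G.Adj u v → p.toSubgraph.Adj u v

/-- `G` has a stable strong `(κ, lam)`-block: a stable set `B` of at least `κ`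
vertices together with, for each unordered pair of distinct vertices of `B`,
at least `lam` pairwise internally disjoint induced paths joining them, such that
path systems of distinct pairs meet exactly in the shared endpoints. -/
def HasStableStrongBlock {V : Type*} (G : SimpleGraph V) (κ lam : ℕ) : Prop :=
  ∃ (B : Set V) (P : V → V → Fin lam → Set V),
    κ ≤ B.ncard ∧
    (∀ x ∈ B, ∀ y ∈ B, x ≠ y → ¬ G.Adj x y) ∧
    (∀ x ∈ B, ∀ y ∈ B, x ≠ y →
      (∀ i, IsInducedPathSet G (P x y i) x y) ∧
      (∀ i j, i ≠ j → ∀ v, v ∈ P x y i → v ∈ P x y j → v = x ∨ v = y) ∧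
      (∀ i, P x y i = P y x i)) ∧
    (∀ x ∈ B, ∀ y ∈ B, ∀ x' ∈ B, ∀ y' ∈ B, x ≠ y → x' ≠ y' →
      ({x, y} : Set V) ≠ {x', y'} →
      (⋃ i, P x y i) ∩ (⋃ i, P x' y' i) = (({x, y} : Set V) ∩ {x', y'}))

/-- `G` is `(κ, lam)`-separable: there is no stable strong `(κ, lam)`-block in `G`. -/
def Separable {V : Type*} (G : SimpleGraph V) (κ lam : ℕ) : Prop :=
  ¬ HasStableStrongBlock G κ lam

/-- In the tree `T` rooted at `u`, `w` is a child of `v`. -/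
def IsChild {α : Type*} (T : SimpleGraph α) (u v w : α) : Prop :=
  T.Adj v w ∧ T.dist u w = T.dist u v + 1

/-- `(T, u)` is a `(δ, ρ)`-regular rooted tree: `T` is a tree, every vertex is at
distance at most `ρ` from `u`, and every vertex at distance less than `ρ` from `u`
has exactly `δ` children. -/
def RootedRegular {α : Type*} (T : SimpleGraph α) (u : α) (δ ρ : ℕ) : Prop :=
  T.IsTree ∧ (∀ v, T.dist u v ≤ ρ) ∧
    ∀ v, T.dist u v < ρ → {w | IsChild T u v w}.ncard = δ

/-- The rooted tree induced by `T` on `s`, with root `r`, is a rooted subtree of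
`(T, u)`: it is a tree and every child relation in it is a child relation in `(T, u)`. -/
def IsRootedSubtree {α : Type*} (T : SimpleGraph α) (u : α) (s : Set α) (r : ↥s) : Prop :=
  (T.induce s).IsTree ∧
    ∀ v w : ↥s, IsChild (T.induce s) r v w → IsChild T u (↑v) (↑w)

open Classical in
/-- The `i`-ancestor of `v` in the tree `T` rooted at `u`: the vertex on the unique
`u`–`v` path at distance `i` from `v`. -/
noncomputable def ancestor {α : Type*} (T : SimpleGraph α) (u v : α) (i : ℕ) : α :=
  if h : ∃ w, T.dist u w + i = T.dist u v ∧ T.dist w v = i then h.choose else v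

/-- The rooted tree `T` (mapped into `G` by `f`) is path-uniform in `G`. -/
def PathUniform {V β : Type*} (G : SimpleGraph V) (f : β → V) (T : SimpleGraph β)
    (r : β) (ρ : ℕ) : Prop :=
  ∀ v v' : β, T.dist r v = ρ → T.dist r v' = ρ → ∀ i j : ℕ, i ≤ ρ → j ≤ ρ →
    (G.Adj (f (ancestor T r v i)) (f (ancestor T r v j)) ↔
      G.Adj (f (ancestor T r v' i)) (f (ancestor T r v' j)))

/-- The rooted tree `T` (mapped into `G` by `f`) is path-induced in `G`. -/
def PathInduced {V β : Type*} (G : SimpleGraph V) (f : β → V) (T : SimpleGraph β)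
    (r : β) (ρ : ℕ) : Prop :=
  ∀ v : β, T.dist r v = ρ → ∀ i j : ℕ, i ≤ ρ → j ≤ ρ →
    (G.Adj (f (ancestor T r v i)) (f (ancestor T r v j)) ↔ (i + 1 = j ∨ j + 1 = i))

/-- The rooted tree `T` (mapped into `G` by `f`) is branch-induced in `G`: every
`G`-edge between vertices of `T` that is not a `T`-edge joins a vertex to one of
its ancestors. -/
def BranchInduced {V β : Type*} (G : SimpleGraph V) (f : β → V) (T : SimpleGraph β)
    (r : β) : Prop :=
  ∀ v w : β, G.Adj (f v) (f w) → ¬ T.Adj v w →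
    (T.dist r v + T.dist v w = T.dist r w ∨ T.dist r w + T.dist w v = T.dist r v)

/-- `G` has a (not necessarily induced) subgraph isomorphic to `H`. -/
def HasSubgraphIso {W V : Type*} (H : SimpleGraph W) (G : SimpleGraph V) : Prop :=
  ∃ f : W → V, Function.Injective f ∧ ∀ a b, H.Adj a b → G.Adj (f a) (f b)

/-- The spanning subgraph of `G` consisting of the edges of color `i` under the
edge-coloring `F`. -/
def colorSub {V : Type*} {c : ℕ} (G : SimpleGraph V) (F : V → V → Fin c) (i : Fin c) :
    SimpleGraph V where
  Adj u v := G.Adj u v ∧ F u v = i ∧ F v u = i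
  symm := by constructor; rintro u v ⟨h1, h2, h3⟩; exact ⟨h1.symm, h3, h2⟩
  loopless := by constructor; rintro u ⟨h, _, _⟩; exact G.ne_of_adj h rfl

/-- Distance from `a` to `b` within the induced subgraph `G[S]` (via walks of `G`
all of whose vertices lie in `S`). -/
noncomputable def distIn {V : Type*} (G : SimpleGraph V) (S : Set V) (a b : V) : ℕ :=
  sInf {n | ∃ w : G.Walk a b, w.length = n ∧ ∀ v ∈ w.support, v ∈ S}

/-- `(a 0, …, a (σ+1))` is a `(σ, θ)`-`X`-abyss in `G`. -/
def IsAbyss {V : Type*} (G : SimpleGraph V) (X : Set V) (σ θ : ℕ) (a : ℕ → V) : Prop :=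
  ∃ (S : ℕ → Set V) (ρ : ℕ → ℕ),
    S 0 ⊆ X ∧ ConnectedIn G (S 0) ∧ (∀ k ≤ σ + 1, a k ∈ S 0) ∧
    (∀ i < σ,
      S (i + 1) ⊆ {v | v ∈ S i ∧ distIn G (S i) (a i) v = ρ i + 1} ∧
      ConnectedIn G (S (i + 1)) ∧
      ∀ k, i + 1 ≤ k → k ≤ σ + 1 → a k ∈ S (i + 1)) ∧
    θ ≤ G.dist (a σ) (a (σ + 1))

/-- The torso of a tree decomposition `(T, β)` of `G` at the node `x`. -/
def torso {V ι : Type*} (G : SimpleGraph V) (T : SimpleGraph ι) (β : ι → Finset V)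
    (x : ι) : SimpleGraph {v : V // v ∈ β x} where
  Adj u v := u ≠ v ∧ (G.Adj ↑u ↑v ∨ ∃ y, T.Adj x y ∧ ↑u ∈ β y ∧ ↑v ∈ β y)
  symm := by
    constructor
    rintro u v ⟨hne, h | ⟨y, hy, h1, h2⟩⟩
    · exact ⟨hne.symm, Or.inl h.symm⟩
    · exact ⟨hne.symm, Or.inr ⟨y, hy, h2, h1⟩⟩
  loopless := by constructor; rintro u ⟨hne, _⟩; exact hne rfl

/-- The vertex set of the component of `T - x` containing `y` (denoted `T_{y∖x}`). -/
def compAway {ι : Type*} (T : SimpleGraph ι) (y x : ι) : Set ι :=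
  {z | ∃ w : T.Walk y z, x ∉ w.support}

/-- A tree decomposition `(T, β)` of `G` is tight. -/
def Tight {V ι : Type*} (G : SimpleGraph V) (T : SimpleGraph ι) (β : ι → Finset V) : Prop :=
  ∀ x y, T.Adj x y →
    ∃ v₀ ∈ (⋃ z ∈ compAway T y x, (β z : Set V)) \ (⋃ z ∈ compAway T x y, (β z : Set V)),
      ∀ u : V, u ∈ β x → u ∈ β y →
        ∃ c : V, G.Adj u c ∧ ∃ w : G.Walk v₀ c, ∀ p ∈ w.support,
          p ∈ (⋃ z ∈ compAway T y x, (β z : Set V)) \ (⋃ z ∈ compAway T x y, (β z : Set V))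

/-- `G` has a subgraph isomorphic to some subdivision of the complete graph `K_μ`:
equivalently, there are `μ` branch vertices joined by pairwise internally disjoint
paths of nonzero length. -/
def HasKSubdivision {V : Type*} (μ : ℕ) (G : SimpleGraph V) : Prop :=
  ∃ b : Fin μ → V, Function.Injective b ∧
    ∃ P : ∀ i j : Fin μ, i < j → G.Walk (b i) (b j),
      (∀ i j (h : i < j), (P i j h).IsPath) ∧
      (∀ i j (h : i < j), ∀ m : Fin μ, b m ∈ (P i j h).support → m = i ∨ m = j) ∧
      (∀ i j (h : i < j), ∀ k l (h' : k < l), (i, j) ≠ (k, l) →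
        ∀ v : V, v ∈ (P i j h).support → v ∈ (P k l h').support →
          (v = b i ∨ v = b j) ∧ (v = b k ∨ v = b l))


/-!
Color the vertices from the leaves upwards: a vertex above the leaves has `δγ` children
carrying at most `γ` colors, so by pigeonhole some color is carried by `δ` of them, and the
vertex inherits that color. Descending from the root and keeping at each vertex `δ` children
of its own color spans a `(δ, ρ)`-regular rooted subtree on which the color is constant, equal
to that of the root; on its leaves the color is `Φ`.
-/

open SimpleGraph Relation

lemma Set.exists_le_ncard_fiber_of_mul_le_ncard {α β : Type*} [Finite β] [Nonempty β]
    {s : Set α} (f : α → β) {n : ℕ} (h : Nat.card β * n ≤ s.ncard) :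
    ∃ b, n ≤ {a | a ∈ s ∧ f a = b}.ncard := by
  classical
  obtain hs | hs := s.finite_or_infinite
  · have := Fintype.ofFinite β
    obtain ⟨b, -, hb⟩ := Finset.exists_le_card_fiber_of_mul_le_card_of_maps_to
      (s := hs.toFinset) (t := Finset.univ) (f := f) (fun _ _ ↦ Finset.mem_univ _)
      Finset.univ_nonempty (by simpa [Set.ncard_eq_toFinset_card s hs] using h)
    refine ⟨b, hb.trans_eq ?_⟩
    rw [← Set.ncard_coe_finset]
    congr 1
    ext
    simp
  · -- The `ncard` of an infinite set is `0`, which forces `n = 0`.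
    rw [hs.ncard, Nat.mul_eq_zero.1 (Nat.le_zero.1 h) |>.resolve_left Nat.card_pos.ne'] at *
    exact ⟨Classical.arbitrary β, Nat.zero_le _⟩

section RootedTree

variable {α : Type*} {T : SimpleGraph α} {u : α}

lemma IsChild.parent_unique (hT : T.IsTree) {p q v : α} (hp : IsChild T u p v)
    (hq : IsChild T u q v) : p = q := by
  obtain ⟨P, hP⟩ := (hT.connected u p).exists_walk_length_eq_dist
  obtain ⟨Q, hQ⟩ := (hT.connected u q).exists_walk_length_eq_dist
  -- Extending a geodesic to the parent by the edge to the child gives a geodesic, hence a path.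
  have hPv : (P.concat hp.1).IsPath := Walk.isPath_of_length_eq_dist _ (by simp [hP, hp.2])
  have hQv : (Q.concat hq.1).IsPath := Walk.isPath_of_length_eq_dist _ (by simp [hQ, hq.2])
  exact (Walk.concat_inj ((hT.existsUnique_path u v).unique hPv hQv)).1

abbrev descendants (R : α → α → Prop) (u : α) : Set α := {v | ReflTransGen R u v}

variable {R : α → α → Prop} (hR : ∀ v w, R v w → IsChild T u v w)
include hR

lemma exists_walk_induce_descendants {v : α} (hv : v ∈ descendants R u) :
    ∃ p : (T.induce (descendants R u)).Walk ⟨u, .refl⟩ ⟨v, hv⟩, p.length = T.dist u v := by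
  induction hv with
  | refl => exact ⟨.nil, by simp⟩
  | @tail w x hw hwx ih =>
    obtain ⟨p, hp⟩ := ih
    have hadj : (T.induce (descendants R u)).Adj ⟨w, hw⟩ ⟨x, hw.tail hwx⟩ := (hR w x hwx).1
    exact ⟨p.concat hadj, by rw [Walk.length_concat, hp, (hR w x hwx).2]⟩

lemma dist_induce_descendants (v : descendants R u) :
    (T.induce (descendants R u)).dist ⟨u, .refl⟩ v = T.dist u v := by
  obtain ⟨p, hp⟩ := exists_walk_induce_descendants hR v.2
  refine le_antisymm (hp ▸ dist_le p) ?_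
  obtain ⟨q, hq⟩ := p.reachable.exists_walk_length_eq_dist
  have := dist_le (q.map (Embedding.induce (descendants R u)).toHom)
  rwa [Walk.length_map, hq] at this

lemma isChild_induce_descendants_iff (v w : descendants R u) :
    IsChild (T.induce (descendants R u)) ⟨u, .refl⟩ v w ↔ IsChild T u v w := by
  simp only [IsChild, dist_induce_descendants hR, comap_adj, Function.Embedding.subtype_apply]

lemma isTree_induce_descendants (hT : T.IsTree) : (T.induce (descendants R u)).IsTree := by
  refine ⟨(connected_iff_exists_forall_reachable _).2 ⟨⟨u, .refl⟩, fun v ↦ ?_⟩,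
    hT.isAcyclic.induce _⟩
  obtain ⟨p, -⟩ := exists_walk_induce_descendants hR v.2
  exact p.reachable

lemma isRootedSubtree_descendants (hT : T.IsTree) :
    IsRootedSubtree T u (descendants R u) ⟨u, .refl⟩ :=
  ⟨isTree_induce_descendants hR hT, fun v w ↦ (isChild_induce_descendants_iff hR v w).1⟩

lemma ncard_isChild_induce_descendants (hT : T.IsTree) (v : descendants R u) :
    {w | IsChild (T.induce (descendants R u)) ⟨u, .refl⟩ v w}.ncard = {w | R v w}.ncard := by
  rw [← Set.ncard_image_of_injective _ Subtype.val_injective]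
  congr 1
  ext w
  constructor
  · rintro ⟨w, hvw, rfl⟩
    replace hvw := (isChild_induce_descendants_iff hR v w).1 hvw
    obtain hwu | ⟨p, -, hpw⟩ := w.2.cases_tail
    · have := hvw.2
      simp [hwu] at this
    · rwa [hvw.parent_unique hT (hR p w hpw)]
  · intro hvw
    exact ⟨⟨w, v.2.tail hvw⟩, (isChild_induce_descendants_iff hR _ _).2 (hR v w hvw), rfl⟩

lemma rootedRegular_induce_descendants (hT : T.IsTree) {δ ρ : ℕ} (hρ : ∀ v, T.dist u v ≤ ρ)
    (hδ : ∀ v ∈ descendants R u, T.dist u v < ρ → {w | R v w}.ncard = δ) :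
    RootedRegular (T.induce (descendants R u)) ⟨u, .refl⟩ δ ρ := by
  refine ⟨isTree_induce_descendants hR hT, fun v ↦ ?_, fun v hv ↦ ?_⟩
  · exact dist_induce_descendants hR v ▸ hρ v
  · rw [ncard_isChild_induce_descendants hR hT]
    exact hδ v v.2 (dist_induce_descendants hR v ▸ hv)

end RootedTree

section InheritedColoring

variable {α I : Type*} (C : α → α → Prop) (δ : ℕ) (Φ : α → I)

open Classical in
/-- The color of `v` as a vertex at height `n`: a color carried by at least `δ` of its
`C`-successors. -/
noncomputable def inheritedColor : ℕ → α → I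
  | 0, v => Φ v
  | n + 1, v =>
    if h : ∃ i, δ ≤ {w | C v w ∧ inheritedColor n w = i}.ncard then h.choose else Φ v

lemma exists_inherited_coloring [Finite I] [Nonempty I] (height : α → ℕ)
    (hC : ∀ v w, C v w → height w + 1 = height v)
    (hcard : ∀ v, 0 < height v → Nat.card I * δ ≤ {w | C v w}.ncard) :
    ∃ c : α → I, (∀ v, height v = 0 → c v = Φ v) ∧
      ∀ v, 0 < height v → δ ≤ {w | C v w ∧ c w = c v}.ncard := by
  refine ⟨fun v ↦ inheritedColor C δ Φ (height v) v, fun v hv ↦ by simp [hv, inheritedColor],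
    fun v hv ↦ ?_⟩
  obtain ⟨n, hn⟩ := Nat.exists_eq_add_one_of_ne_zero hv.ne'
  have hex : ∃ i, δ ≤ {w | C v w ∧ inheritedColor C δ Φ n w = i}.ncard :=
    Set.exists_le_ncard_fiber_of_mul_le_ncard _ (hcard v hv)
  have hsucc : ∀ w, C v w → height w = n := fun w hw ↦ by have := hC v w hw; omega
  simp only [hn, inheritedColor, dif_pos hex]
  refine hex.choose_spec.trans_eq (congrArg Set.ncard (Set.ext fun w ↦ ?_))
  exact and_congr_right fun hw ↦ by rw [hsucc w hw]

end InheritedColoring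

theorem statement7_general {α : Type} (δ γ : ℕ) (ρ : ℕ)
    (T : SimpleGraph α) (u : α) (hreg : RootedRegular T u (δ * γ) ρ)
    (I : Type) [Finite I] [Nonempty I] (hI : Nat.card I ≤ γ) (Φ : α → I) :
    ∃ (i : I) (s : Set α) (hu : u ∈ s),
      IsRootedSubtree T u s ⟨u, hu⟩ ∧
      RootedRegular (T.induce s) ⟨u, hu⟩ δ ρ ∧
      (∀ v : ↥s, (T.induce s).dist ⟨u, hu⟩ v = ρ → T.dist u ↑v = ρ) ∧
      (∀ v : ↥s, (T.induce s).dist ⟨u, hu⟩ v = ρ → Φ ↑v = i) := by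
  obtain ⟨hT, hρ, hdeg⟩ := hreg
  obtain ⟨c, hleaf, hinherit⟩ := exists_inherited_coloring (IsChild T u) δ Φ
    (fun v ↦ ρ - T.dist u v) (fun v w hvw ↦ by have := hρ w; have := hvw.2; omega)
    (fun v hv ↦ by rw [hdeg v (by omega), mul_comm]; exact Nat.mul_le_mul_left δ hI)
  have hkids : ∀ v, ∃ S ⊆ {w | IsChild T u v w ∧ c w = c v}, T.dist u v < ρ → S.ncard = δ :=
    fun v ↦ if hv : T.dist u v < ρ then
      (Set.exists_subset_card_eq (hinherit v (by omega))).imp fun _ h ↦ ⟨h.1, fun _ ↦ h.2⟩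
    else ⟨∅, Set.empty_subset _, fun h ↦ absurd h hv⟩
  choose kids hkids_sub hkids_card using hkids
  have hR : ∀ v w, w ∈ kids v → IsChild T u v w := fun v w hw ↦ (hkids_sub v hw).1
  have hcolor : ∀ v ∈ descendants (fun v w ↦ w ∈ kids v) u, c v = c u := by
    intro v hv
    induction hv with
    | refl => rfl
    | tail _ hw ih => exact (hkids_sub _ hw).2.trans ih
  refine ⟨c u, _, .refl, isRootedSubtree_descendants hR hT,
    rootedRegular_induce_descendants hR hT hρ fun v _ hv ↦ hkids_card v hv, fun v hv ↦ ?_,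
    fun v hv ↦ ?_⟩
  · rwa [← dist_induce_descendants hR]
  · rw [dist_induce_descendants hR] at hv
    rw [← hleaf v (by simp [hv]), hcolor v v.2]

/-- In a `(δγ, ρ)`-regular rooted tree, for any coloring of the vertices at
distance `ρ` from the root by at most `γ` colors, some `(δ, ρ)`-regular rooted subtree
(with the same root) has all its vertices at distance `ρ` from the root of one color. -/
theorem statement7 {α : Type} [Fintype α] (δ γ : ℕ) (hδ : 1 ≤ δ) (hγ : 1 ≤ γ) (ρ : ℕ)
    (T : SimpleGraph α) (u : α) (hreg : RootedRegular T u (δ * γ) ρ)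
    (I : Type) [Finite I] [Nonempty I] (hI : Nat.card I ≤ γ) (Φ : α → I) :
    ∃ (i : I) (s : Set α) (hu : u ∈ s),
      IsRootedSubtree T u s ⟨u, hu⟩ ∧
      RootedRegular (T.induce s) ⟨u, hu⟩ δ ρ ∧
      (∀ v : ↥s, (T.induce s).dist ⟨u, hu⟩ v = ρ → T.dist u ↑v = ρ) ∧
      (∀ v : ↥s, (T.induce s).dist ⟨u, hu⟩ v = ρ → Φ ↑v = i) :=
  statement7_general δ γ ρ T u hreg I hI Φ
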